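/- Let G be a finite group, P a G-poset with an initial object x₀, and ρ : P⋊G → C a category extension; give C the atomic topology. Then a presheaf of sets on C is a sheaf for the atomic topology if and only if it is isomorphic to the fixed-point presheaf F_M for some right G-set M. -/

import Mathlib

open CategoryTheory

/-! ## Basic site-theoretic notions -/

/-- The Ore condition: any cospan can be completed to a commutative square. -/
def OreCondition (C : Type*) [Category C] : Prop :=
  ∀ ⦃x y z : C⦄ (f : y ⟶ x) (g : z ⟶ x),
    ∃ (w : C) (p : w ⟶ y) (q : w ⟶ z), p ≫ f = q ≫ g

/-- A Grothendieck topology is the atomic topology iff its covering sieves are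
exactly the nonempty sieves. -/
def IsAtomicTopology {C : Type*} [Category C] (J : GrothendieckTopology C) : Prop :=
  ∀ (x : C) (S : Sieve x), S ∈ J x ↔ ∃ (y : C) (f : y ⟶ x), S f

/-- The presieve on `c` consisting of all morphisms with domain `c₀`. -/
def domPresieve {C : Type*} [Category C] (c₀ : C) (c : C) : Presieve c :=
  fun Y => {_f | Y = c₀}

/-! ## Right `G`-sets and the orbit category -/

/-- The category of right `G`-sets, realized as presheaves of sets on the
one-object category of `G`. -/
abbrev GSet (G : Type) [Group G] := (SingleObj G)ᵒᵖ ⥤ Type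

variable {G : Type} [Group G]

/-- The right coset space `H\G` as a right `G`-set (`G` acting by right
multiplication). -/
def cosetGSet (H : Subgroup G) : GSet G where
  obj _ := Quotient (QuotientGroup.rightRel H)
  map f := TypeCat.ofHom (Quotient.map' (fun x => x * f.unop)
    (fun a b hab => by
      rw [QuotientGroup.rightRel_apply] at hab ⊢
      rw [mul_inv_rev, ← mul_assoc, mul_inv_cancel_right]
      exact hab))
  map_id _ := by
    ext q
    induction q using Quotient.inductionOn' with
    | h a => exact congrArg (Quotient.mk _) (mul_one a)
  map_comp f g := by
    ext q
    induction q using Quotient.inductionOn' with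
    | h a => exact congrArg (Quotient.mk _) (mul_assoc a f.unop g.unop).symm

/-- The orbit category `O(G)`: the full subcategory of right `G`-sets on the
coset spaces `H\G`, indexed by the subgroups of `G`. -/
abbrev OrbitCat (G : Type) [Group G] := InducedCategory (GSet G) (cosetGSet (G := G))

/-- For `a ∈ G`, the `G`-map `c_a : 1\G → 1\G`, `k ↦ a * k`. -/
def botAuto (a : G) : cosetGSet (⊥ : Subgroup G) ⟶ cosetGSet (⊥ : Subgroup G) where
  app _ := TypeCat.ofHom (Quotient.map' (fun k => a * k)
    (fun x y hxy => by
      rw [QuotientGroup.rightRel_apply] at hxy ⊢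
      simp only [Subgroup.mem_bot] at hxy ⊢
      rw [mul_inv_rev, ← mul_assoc, mul_assoc a, hxy]
      simp))
  naturality X Y f := by
    ext q
    induction q using Quotient.inductionOn' with
    | h k => exact congrArg (Quotient.mk _) (mul_assoc a k f.unop).symm

/-- The functor from the one-object category of `G` to the orbit category with
value `1\G`, sending `a` to `c_a`; it makes `F(1\G)` a right `G`-set for any
presheaf `F` on the orbit category. -/
def orbitBotIota (G : Type) [Group G] : SingleObj G ⥤ OrbitCat G where
  obj _ := (⊥ : Subgroup G)
  map a := ⟨botAuto a⟩
  map_id _ := by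
    apply InducedCategory.hom_ext
    apply NatTrans.ext
    funext X
    ext q
    induction q using Quotient.inductionOn' with
    | h k => exact congrArg (Quotient.mk _) (one_mul k)
  map_comp {x y z} a b := by
    apply InducedCategory.hom_ext
    apply NatTrans.ext
    funext X
    ext q
    induction q using Quotient.inductionOn' with
    | h k => exact congrArg (Quotient.mk _) (mul_assoc b a k)

/-! ## The transporter category of a `G`-poset -/

/-- The transporter category `P ⋊ G` of a `G`-poset `P`: objects are those of
`P`, and morphisms `x ⟶ y` are elements `g ∈ G` with `g • x ≤ y`. -/
@[ext] structure Transporter (G : Type) (P : Type) where pt : P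

instance Transporter.category (G P : Type) [Group G] [PartialOrder P] [MulAction G P]
    [CovariantClass G P (· • ·) (· ≤ ·)] : Category (Transporter G P) where
  Hom x y := { g : G // g • x.pt ≤ y.pt }
  id x := ⟨1, by simp⟩
  comp {x y z} f g := ⟨g.1 * f.1, by
    rw [mul_smul]
    exact le_trans (CovariantClass.elim g.1 f.2) g.2⟩
  id_comp f := Subtype.ext (mul_one _)
  comp_id f := Subtype.ext (one_mul _)
  assoc f g h := Subtype.ext (mul_assoc h.1 g.1 f.1).symm

variable {P : Type} [PartialOrder P] [MulAction G P]
    [CovariantClass G P (· • ·) (· ≤ ·)]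

theorem smul_le_smul_act (g : G) {a b : P} (h : a ≤ b) : g • a ≤ g • b :=
  CovariantClass.elim g h

/-- An initial (i.e. bottom) element of a `G`-poset is fixed by `G`. -/
theorem smul_bot_eq {x₀ : P} (hbot : ∀ x : P, x₀ ≤ x) (g : G) : g • x₀ = x₀ :=
  le_antisymm (by simpa using smul_le_smul_act g (hbot (g⁻¹ • x₀))) (hbot _)

/-- The endomorphism `(g, id)` of the initial object `x₀` of `P ⋊ G`. -/
def gmor {x₀ : P} (hbot : ∀ x : P, x₀ ≤ x) (g : G) :
    (⟨x₀⟩ : Transporter G P) ⟶ (⟨x₀⟩ : Transporter G P) :=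
  ⟨g, le_of_eq (smul_bot_eq hbot g)⟩

theorem gmor_comp {x₀ : P} (hbot : ∀ x : P, x₀ ≤ x) (a b : G) :
    gmor (G := G) hbot b ≫ gmor hbot a = gmor hbot (a * b) := rfl

theorem gmor_one {x₀ : P} (hbot : ∀ x : P, x₀ ≤ x) :
    gmor (G := G) hbot (1 : G) = 𝟙 (⟨x₀⟩ : Transporter G P) := rfl

/-- The projection functor `π : P ⋊ G ⥤ G`. -/
def piFunctor (G P : Type) [Group G] [PartialOrder P] [MulAction G P]
    [CovariantClass G P (· • ·) (· ≤ ·)] : Transporter G P ⥤ SingleObj G where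
  obj _ := SingleObj.star G
  map f := f.1
  map_id _ := rfl
  map_comp _ _ := rfl

/-! ## Quotients of transporter categories and fixed-point presheaves -/

variable {C : Type} [SmallCategory C]

section
variable (ρ : Transporter G P ⥤ C) {x₀ : P} (hbot : ∀ x : P, x₀ ≤ x)

/-- `Hom_C(x₀, c)` as a right `G`-set, with `f · g := ρ(g, id) ≫ f`. -/
def homGSet (c : C) : GSet G where
  obj _ := (ρ.obj ⟨x₀⟩ ⟶ c)
  map f := TypeCat.ofHom fun φ => ρ.map (gmor hbot f.unop) ≫ φ
  map_id _ := by
    ext φ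
    show ρ.map (gmor hbot (1 : G)) ≫ φ = φ
    rw [gmor_one, ρ.map_id, Category.id_comp]
  map_comp {X Y Z} f g := by
    ext φ
    show ρ.map (gmor hbot (f.unop * g.unop)) ≫ φ =
      ρ.map (gmor hbot g.unop) ≫ ρ.map (gmor hbot f.unop) ≫ φ
    rw [← gmor_comp, ρ.map_comp, Category.assoc]

/-- Postcomposition `Hom_C(x₀, c) → Hom_C(x₀, c')` with `φ : c ⟶ c'`, as a map
of right `G`-sets. -/
def homGSetMap {c c' : C} (φ : c ⟶ c') : homGSet ρ hbot c ⟶ homGSet ρ hbot c' where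
  app _ := TypeCat.ofHom fun f => (show ρ.obj ⟨x₀⟩ ⟶ c from f) ≫ φ
  naturality X Y f := by
    ext ψ
    show (ρ.map (gmor hbot f.unop) ≫ (show ρ.obj ⟨x₀⟩ ⟶ c from ψ)) ≫ φ =
      ρ.map (gmor hbot f.unop) ≫ ((show ρ.obj ⟨x₀⟩ ⟶ c from ψ) ≫ φ)
    exact Category.assoc _ _ _

theorem homGSetMap_id (c : C) : homGSetMap ρ hbot (𝟙 c) = 𝟙 (homGSet ρ hbot c) := by
  apply NatTrans.ext
  funext X
  ext f
  exact Category.comp_id f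

theorem homGSetMap_comp {c c' c'' : C} (φ : c ⟶ c') (ψ : c' ⟶ c'') :
    homGSetMap ρ hbot (φ ≫ ψ) = homGSetMap ρ hbot φ ≫ homGSetMap ρ hbot ψ := by
  apply NatTrans.ext
  funext X
  ext f
  exact (Category.assoc _ _ _).symm

/-- The fixed-point presheaf `F_M : x ↦ Hom_{G-Set}(Hom_C(x₀, x), M)` on `C`. -/
def fixedPointPresheaf (M : GSet G) : Cᵒᵖ ⥤ Type where
  obj c := homGSet ρ hbot c.unop ⟶ M
  map {c c'} ψ := TypeCat.ofHom fun η => homGSetMap ρ hbot ψ.unop ≫ η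
  map_id c := by
    refine TypeCat.homEquiv.injective (funext fun η => ?_)
    show homGSetMap ρ hbot (𝟙 c.unop) ≫ η = η
    rw [homGSetMap_id, Category.id_comp]
  map_comp {c c' c''} ψ ψ' := by
    refine TypeCat.homEquiv.injective (funext fun η => ?_)
    show homGSetMap ρ hbot (ψ'.unop ≫ ψ.unop) ≫ η = _
    rw [homGSetMap_comp, Category.assoc]
    rfl

/-- The right `G`-set `𝔊(x₀)` attached to a presheaf `𝔊` on `C`: `g ∈ G`
acts as `𝔊(ρ(g, id))`. -/
def evalGSet (𝔊 : Cᵒᵖ ⥤ Type) : GSet G where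
  obj _ := 𝔊.obj (Opposite.op (ρ.obj ⟨x₀⟩))
  map f := 𝔊.map (ρ.map (gmor hbot f.unop)).op
  map_id _ := by
    show 𝔊.map (ρ.map (gmor hbot (1 : G))).op = _
    rw [gmor_one, ρ.map_id]
    exact 𝔊.map_id _
  map_comp {X Y Z} f g := by
    show 𝔊.map (ρ.map (gmor hbot (f.unop * g.unop))).op = _
    rw [← gmor_comp, ρ.map_comp, op_comp, 𝔊.map_comp]

end

/-- `ρ : P⋊G ⥤ C` is a category extension: it is bijective on objects,
surjective on morphism sets, the kernel groups `K(y)` act freely by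
postcomposition on hom sets, and `ρ` exactly identifies the `K(y)`-orbits of
morphisms, i.e. `K(y)\Hom(x, y) ≅ Hom_C(ρx, ρy)`. -/
structure IsCatExtension (ρ : Transporter G P ⥤ C) : Prop where
  bij_obj : Function.Bijective ρ.obj
  surj_map : ∀ {x y : Transporter G P} (f : ρ.obj x ⟶ ρ.obj y), ∃ u : x ⟶ y, ρ.map u = f
  free : ∀ {y : Transporter G P} (α : y ⟶ y), ρ.map α = 𝟙 (ρ.obj y) →
    ∀ {x : Transporter G P} (u : x ⟶ y), u ≫ α = u → α = 𝟙 y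
  fiber : ∀ {x y : Transporter G P} (u u' : x ⟶ y),
    ρ.map u = ρ.map u' ↔ ∃ α : y ⟶ y, ρ.map α = 𝟙 (ρ.obj y) ∧ u ≫ α = u'

/-! ## The transporter category `T(G)` on subgroups -/

/-- The transporter category `T(G)`: objects are the subgroups of `G`,
morphisms `H ⟶ K` are elements `g ∈ G` with `gHg⁻¹ ≤ K`. -/
@[ext] structure TransporterCat (G : Type) [Group G] where sub : Subgroup G

instance TransporterCat.category (G : Type) [Group G] : Category (TransporterCat G) where
  Hom H K := { g : G // ∀ h ∈ H.sub, g * h * g⁻¹ ∈ K.sub }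
  id H := ⟨1, fun h hh => by simpa using hh⟩
  comp {H K L} f g := ⟨g.1 * f.1, fun h hh => by
    have hmem := g.2 _ (f.2 h hh)
    have heq : g.1 * (f.1 * h * f.1⁻¹) * g.1⁻¹ = (g.1 * f.1) * h * (g.1 * f.1)⁻¹ := by group
    rwa [heq] at hmem⟩
  id_comp f := Subtype.ext (mul_one _)
  comp_id f := Subtype.ext (one_mul _)
  assoc f g h := Subtype.ext (mul_assoc h.1 g.1 f.1).symm

/-- The conjugate subgroup `gHg⁻¹`. -/
def conjSubgroup (g : G) (H : Subgroup G) : Subgroup G :=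
  H.map (MulAut.conj g).toMonoidHom

lemma conjSubgroup_inv_mem {g : G} {H : Subgroup G} {w : G}
    (hw : w ∈ conjSubgroup g H) : g⁻¹ * w * g⁻¹⁻¹ ∈ H := by
  obtain ⟨h, hh, rfl⟩ := hw
  have : g⁻¹ * ((MulAut.conj g).toMonoidHom h) * g⁻¹⁻¹ = h := by
    simp [MulAut.conj_apply]; group
  rwa [this]

/-- The `G`-map `H\G → K\G`, `Hk ↦ Kgk`, attached to `g ∈ G` with `gHg⁻¹ ≤ K`. -/
def transToOrbit {H K : Subgroup G} (g : { g : G // ∀ h ∈ H, g * h * g⁻¹ ∈ K }) :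
    cosetGSet H ⟶ cosetGSet K where
  app _ := TypeCat.ofHom (Quotient.map' (fun k => g.1 * k)
    (fun a b hab => by
      rw [QuotientGroup.rightRel_apply] at hab ⊢
      have := g.2 _ hab
      have heq : g.1 * (b * a⁻¹) * g.1⁻¹ = (g.1 * b) * (g.1 * a)⁻¹ := by group
      rwa [heq] at this))
  naturality X Y f := by
    ext q
    induction q using Quotient.inductionOn' with
    | h k => exact congrArg (Quotient.mk _) (mul_assoc g.1 k f.unop).symm

/-- The setoid on `{g : G // gHg⁻¹ ≤ K}` whose classes are right cosets `Kg`. -/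
def transSetoid (H K : Subgroup G) : Setoid { g : G // ∀ h ∈ H, g * h * g⁻¹ ∈ K } where
  r a b := a.1 * b.1⁻¹ ∈ K
  iseqv := by
    constructor
    · intro a; simpa using K.one_mem
    · intro a b h
      simpa using K.inv_mem h
    · intro a b c h1 h2
      have := K.mul_mem h1 h2
      simpa [mul_assoc] using this

/-! ## The coset space `H\G` as a discrete `G`-poset -/

/-- The coset space `H\G` as a discretely ordered `G`-poset, with `g` acting
by `Hk ↦ Hkg⁻¹`. -/
def CosetPoset (G : Type) [Group G] (H : Subgroup G) :=
  Quotient (QuotientGroup.rightRel H)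

instance (H : Subgroup G) : PartialOrder (CosetPoset G H) where
  le x y := x = y
  le_refl _ := rfl
  le_trans _ _ _ h h' := Eq.trans h h'
  le_antisymm _ _ h _ := h

instance (H : Subgroup G) : MulAction G (CosetPoset G H) where
  smul g := Quotient.map' (fun k => k * g⁻¹)
    (fun a b hab => by
      rw [QuotientGroup.rightRel_apply] at hab ⊢
      simpa [mul_assoc] using hab)
  one_smul q := by
    induction q using Quotient.inductionOn' with
    | h k => exact congrArg (Quotient.mk _) (by simp)
  mul_smul a b q := by
    induction q using Quotient.inductionOn' with
    | h k => exact congrArg (Quotient.mk _) (by simp [mul_assoc])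

instance (H : Subgroup G) : CovariantClass G (CosetPoset G H) (· • ·) (· ≤ ·) where
  elim g x y h := le_of_eq (congrArg (g • ·) (le_antisymm h (Eq.symm h : y ≤ x)))

/-! ## Underlying `G`-set of a right `RG`-module -/

/-- The underlying right `G`-set of a right `RG`-module. -/
noncomputable def UGSet (R : Type) [CommRing R]
    (M : ModuleCat (MonoidAlgebra R G)ᵐᵒᵖ) : GSet G where
  obj _ := M
  map f := TypeCat.ofHom fun m => (MulOpposite.op (MonoidAlgebra.single f.unop (1 : R))) • m
  map_id _ := by
    ext m
    show (MulOpposite.op (MonoidAlgebra.single (1 : G) (1 : R))) • m = m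
    rw [← MonoidAlgebra.one_def, MulOpposite.op_one, one_smul]
  map_comp {X Y Z} f g := by
    ext m
    show (MulOpposite.op (MonoidAlgebra.single (f.unop * g.unop) (1 : R))) • m =
      (MulOpposite.op (MonoidAlgebra.single g.unop (1 : R))) •
        ((MulOpposite.op (MonoidAlgebra.single f.unop (1 : R))) • m)
    rw [smul_smul, ← MulOpposite.op_mul, MonoidAlgebra.single_mul_single, one_mul]

/-! Every object `c` of `C` receives a morphism from `x₀`, any two of them differ by an element
of `G`, and only `x₀` maps to `x₀`. Hence every nonempty sieve on `c` contains the sieve generated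
by any single `φ : x₀ ⟶ c`, these sieves are stable under pullback, and the atomic sheaf condition
reduces to the sheaf condition for the singletons `{φ}`. For `{φ}` it says that `𝔊(φ)` maps `𝔊(c)`
bijectively onto the elements of `𝔊(x₀)` whose stabiliser contains that of `φ`. Since
`Hom_C(x₀, c)` is a transitive `G`-set, evaluation at `φ` identifies the `G`-maps
`Hom_C(x₀, c) → M` with exactly these elements of `M`. So the condition says that
`𝔊 ⟶ F_{𝔊(x₀)}, s ↦ (ψ ↦ 𝔊(ψ) s)` is an isomorphism, and `F_M` satisfies it directly. -/

open Opposite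

namespace Transporter

lemma eq_of_hom_to_bot {x₀ : P} (hbot : ∀ x : P, x₀ ≤ x) {w : Transporter G P}
    (v : w ⟶ ⟨x₀⟩) : w = ⟨x₀⟩ := by
  ext
  have hv : v.1 • w.pt = x₀ := le_antisymm v.2 (hbot _)
  rw [← inv_smul_smul v.1 w.pt, hv, smul_bot_eq hbot]

def homOfBot {x₀ : P} (hbot : ∀ x : P, x₀ ≤ x) (z : Transporter G P) :
    (⟨x₀⟩ : Transporter G P) ⟶ z :=
  ⟨1, by rw [one_smul]; exact hbot _⟩

end Transporter

namespace GSet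

variable (M : GSet G)

def act (a : G) : M.obj (op (SingleObj.star G)) → M.obj (op (SingleObj.star G)) :=
  M.map (show SingleObj.star G ⟶ SingleObj.star G from a).op

lemma act_one (m : M.obj (op (SingleObj.star G))) : M.act 1 m = m :=
  types_congr_hom (M.map_id _) m

lemma act_act (a b : G) (m : M.obj (op (SingleObj.star G))) :
    M.act b (M.act a m) = M.act (a * b) m :=
  (types_congr_hom (M.map_comp _ _) m).symm

end GSet

section FixedPoint

variable {ρ : Transporter G P ⥤ C} {x₀ : P} (hbot : ∀ x : P, x₀ ≤ x)

lemma homGSet_hom_app_gmor_comp {M : GSet G} {c : C} (u : homGSet ρ hbot c ⟶ M) (a : G)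
    (ψ : ρ.obj ⟨x₀⟩ ⟶ c) :
    u.app (op (SingleObj.star G)) (ρ.map (gmor hbot a) ≫ ψ) =
      M.act a (u.app (op (SingleObj.star G)) ψ) :=
  types_congr_hom (u.naturality (show SingleObj.star G ⟶ SingleObj.star G from a).op) ψ

/-- The condition on `m` for `φ ↦ m` to extend to a `G`-map `Hom_C(x₀, c) → M`. -/
def OrbitCompatible (M : GSet G) {c : C} (φ : ρ.obj ⟨x₀⟩ ⟶ c)
    (m : M.obj (op (SingleObj.star G))) : Prop :=
  ∀ a b : G, ρ.map (gmor hbot a) ≫ φ = ρ.map (gmor hbot b) ≫ φ → M.act a m = M.act b m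

lemma orbitCompatible_app {M : GSet G} {c : C} (u : homGSet ρ hbot c ⟶ M)
    (φ : ρ.obj ⟨x₀⟩ ⟶ c) : OrbitCompatible hbot M φ (u.app (op (SingleObj.star G)) φ) := by
  intro a b h
  rw [← homGSet_hom_app_gmor_comp, ← homGSet_hom_app_gmor_comp, h]

lemma fixedPointPresheaf_map_app {M : GSet G} {c c' : C} (ψ : c' ⟶ c)
    (η : homGSet ρ hbot c ⟶ M) (χ : ρ.obj ⟨x₀⟩ ⟶ c') :
    ((fixedPointPresheaf ρ hbot M).map ψ.op η).app (op (SingleObj.star G)) χ =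
      η.app (op (SingleObj.star G)) (χ ≫ ψ) :=
  rfl

variable (ρ) in
def toFixedPointPresheaf (F : Cᵒᵖ ⥤ Type) :
    F ⟶ fixedPointPresheaf ρ hbot (evalGSet ρ hbot F) where
  app c := TypeCat.ofHom fun s =>
    { app _ := TypeCat.ofHom fun ψ => F.map ψ.op s
      naturality _ _ _ := by
        ext ψ
        exact F.map_comp_apply _ _ s }
  naturality _ _ _ := by
    ext s
    apply NatTrans.ext
    funext
    ext ψ
    exact (F.map_comp_apply _ _ s).symm

end FixedPoint

namespace IsCatExtension

variable {ρ : Transporter G P ⥤ C} {x₀ : P}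

lemma nonempty_hom_from_bot (hρ : IsCatExtension ρ) (hbot : ∀ x : P, x₀ ≤ x) (c : C) :
    Nonempty (ρ.obj ⟨x₀⟩ ⟶ c) := by
  obtain ⟨z, rfl⟩ := hρ.bij_obj.2 c
  exact ⟨ρ.map (Transporter.homOfBot hbot z)⟩

lemma exists_eq_gmor_comp (hρ : IsCatExtension ρ) (hbot : ∀ x : P, x₀ ≤ x) {c : C}
    (φ ψ : ρ.obj ⟨x₀⟩ ⟶ c) : ∃ a : G, φ = ρ.map (gmor hbot a) ≫ ψ := by
  obtain ⟨z, rfl⟩ := hρ.bij_obj.2 c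
  obtain ⟨v, rfl⟩ := hρ.surj_map φ
  obtain ⟨w, rfl⟩ := hρ.surj_map ψ
  refine ⟨w.1⁻¹ * v.1, ?_⟩
  rw [← ρ.map_comp]
  exact congrArg ρ.map (Subtype.ext (mul_inv_cancel_left w.1 v.1).symm)

lemma hom_to_bot_induction (hρ : IsCatExtension ρ) (hbot : ∀ x : P, x₀ ≤ x)
    {motive : ∀ ⦃z : C⦄, (z ⟶ ρ.obj ⟨x₀⟩) → Prop} (h : ∀ a : G, motive (ρ.map (gmor hbot a)))
    ⦃z : C⦄ (p : z ⟶ ρ.obj ⟨x₀⟩) : motive p := by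
  obtain ⟨w, rfl⟩ := hρ.bij_obj.2 z
  obtain ⟨v, rfl⟩ := hρ.surj_map p
  obtain rfl := Transporter.eq_of_hom_to_bot hbot v
  exact h v.1

lemma generate_singleton_apply (hρ : IsCatExtension ρ) (hbot : ∀ x : P, x₀ ≤ x) {c : C}
    (φ : ρ.obj ⟨x₀⟩ ⟶ c) {z : C} (g : z ⟶ c) :
    Sieve.generate (Presieve.singleton φ) g ↔ Nonempty (z ⟶ ρ.obj ⟨x₀⟩) := by
  constructor
  · rintro ⟨_, h, _, ⟨⟩, -⟩
    exact ⟨h⟩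
  · rintro ⟨p⟩
    induction p using hρ.hom_to_bot_induction hbot
    obtain ⟨b, rfl⟩ := hρ.exists_eq_gmor_comp hbot g φ
    exact ⟨_, _, φ, Presieve.singleton_self φ, rfl⟩

lemma pullback_generate_singleton (hρ : IsCatExtension ρ) (hbot : ∀ x : P, x₀ ≤ x) {c c' : C}
    (φ : ρ.obj ⟨x₀⟩ ⟶ c) (f : c' ⟶ c) (ψ : ρ.obj ⟨x₀⟩ ⟶ c') :
    (Sieve.generate (Presieve.singleton φ)).pullback f =
      Sieve.generate (Presieve.singleton ψ) := by
  ext z g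
  rw [Sieve.pullback_apply, hρ.generate_singleton_apply hbot, hρ.generate_singleton_apply hbot]

lemma generate_singleton_le (hρ : IsCatExtension ρ) (hbot : ∀ x : P, x₀ ≤ x)
    {J : GrothendieckTopology C} (hJ : IsAtomicTopology J) {c : C} {S : Sieve c}
    (hS : S ∈ J c) (φ : ρ.obj ⟨x₀⟩ ⟶ c) : Sieve.generate (Presieve.singleton φ) ≤ S := by
  obtain ⟨c', f, hf⟩ := (hJ c S).1 hS
  obtain ⟨ψ⟩ := hρ.nonempty_hom_from_bot hbot c'
  obtain ⟨a, rfl⟩ := hρ.exists_eq_gmor_comp hbot φ (ψ ≫ f)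
  rw [Sieve.generate_le_iff]
  rintro _ _ ⟨⟩
  exact S.downward_closed (S.downward_closed hf ψ) _

theorem isSheaf_iff_isSheafFor_singleton (hρ : IsCatExtension ρ) (hbot : ∀ x : P, x₀ ≤ x)
    {J : GrothendieckTopology C} (hJ : IsAtomicTopology J) (F : Cᵒᵖ ⥤ Type) :
    Presieve.IsSheaf J F ↔
      ∀ (c : C) (φ : ρ.obj ⟨x₀⟩ ⟶ c), (Presieve.singleton φ).IsSheafFor F := by
  refine ⟨fun hF c φ => ?_, fun hF c S hS => ?_⟩
  · rw [Presieve.isSheafFor_iff_generate]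
    exact hF _ ((hJ c _).2 ⟨_, φ, Sieve.le_generate _ _ _ (Presieve.singleton_self φ)⟩)
  · obtain ⟨φ⟩ := hρ.nonempty_hom_from_bot hbot c
    refine Presieve.isSheafFor_subsieve F (hρ.generate_singleton_le hbot hJ hS φ) fun c' f => ?_
    obtain ⟨ψ⟩ := hρ.nonempty_hom_from_bot hbot c'
    rw [hρ.pullback_generate_singleton hbot φ f ψ, ← Presieve.isSheafFor_iff_generate]
    exact hF c' ψ

lemma isSheafFor_singleton_iff (hρ : IsCatExtension ρ) (hbot : ∀ x : P, x₀ ≤ x)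
    (F : Cᵒᵖ ⥤ Type) {c : C} (φ : ρ.obj ⟨x₀⟩ ⟶ c) :
    (Presieve.singleton φ).IsSheafFor F ↔
      ∀ x, OrbitCompatible hbot (evalGSet ρ hbot F) φ x → ∃! y, F.map φ.op y = x := by
  rw [Presieve.isSheafFor_singleton]
  refine forall_congr' fun x => imp_congr_left ⟨fun h a b hab => h _ _ hab, fun h z p₁ => ?_⟩
  induction p₁ using hρ.hom_to_bot_induction hbot with | h a => ?_
  intro p₂ hp
  obtain ⟨b, rfl⟩ := hρ.exists_eq_gmor_comp hbot p₂ (𝟙 _)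
  rw [Category.comp_id] at hp ⊢
  exact h a b hp

lemma homGSet_hom_ext (hρ : IsCatExtension ρ) (hbot : ∀ x : P, x₀ ≤ x) {M : GSet G} {c : C}
    {u u' : homGSet ρ hbot c ⟶ M} (φ : ρ.obj ⟨x₀⟩ ⟶ c)
    (h : u.app (op (SingleObj.star G)) φ = u'.app (op (SingleObj.star G)) φ) : u = u' := by
  ext ⟨⟨⟩⟩ ψ
  change u.app (op (SingleObj.star G)) ψ = u'.app (op (SingleObj.star G)) ψ
  obtain ⟨a, rfl⟩ := hρ.exists_eq_gmor_comp hbot ψ φ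
  rw [homGSet_hom_app_gmor_comp, homGSet_hom_app_gmor_comp, h]

lemma exists_homGSet_hom_app_eq (hρ : IsCatExtension ρ) (hbot : ∀ x : P, x₀ ≤ x) {M : GSet G}
    {c : C} (φ : ρ.obj ⟨x₀⟩ ⟶ c) {m : M.obj (op (SingleObj.star G))}
    (hm : OrbitCompatible hbot M φ m) :
    ∃ u : homGSet ρ hbot c ⟶ M, u.app (op (SingleObj.star G)) φ = m := by
  choose a ha using fun ψ => hρ.exists_eq_gmor_comp hbot ψ φ
  refine ⟨{ app _ := TypeCat.ofHom fun ψ => M.act (a ψ) m, naturality := ?_ }, ?_⟩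
  · rintro ⟨⟨⟩⟩ ⟨⟨⟩⟩ ⟨b⟩
    ext ψ
    change M.act (a (ρ.map (gmor hbot b) ≫ ψ)) m = M.act b (M.act (a ψ) m)
    rw [GSet.act_act]
    refine hm _ _ ?_
    rw [← ha, ← gmor_comp, ρ.map_comp, Category.assoc, ← ha ψ]
  · change M.act (a φ) m = m
    refine (hm _ 1 ?_).trans (M.act_one m)
    rw [← ha, gmor_one, ρ.map_id, Category.id_comp]

lemma isIso_toFixedPointPresheaf (hρ : IsCatExtension ρ) (hbot : ∀ x : P, x₀ ≤ x)
    {J : GrothendieckTopology C} (hJ : IsAtomicTopology J) {F : Cᵒᵖ ⥤ Type}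
    (hF : Presieve.IsSheaf J F) : IsIso (toFixedPointPresheaf ρ hbot F) := by
  refine (NatTrans.isIso_iff_isIso_app _).2 fun c => (isIso_iff_bijective _).2 ?_
  obtain ⟨φ⟩ := hρ.nonempty_hom_from_bot hbot c.unop
  have hφ := (hρ.isSheafFor_singleton_iff hbot F φ).1
    ((hρ.isSheaf_iff_isSheafFor_singleton hbot hJ F).1 hF c.unop φ)
  constructor
  · intro s t hst
    have hst_φ : F.map φ.op s = F.map φ.op t := congr_arg
      (fun u : homGSet ρ hbot c.unop ⟶ _ => u.app (op (SingleObj.star G)) φ) hst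
    exact (hφ _ (orbitCompatible_app hbot (toFixedPointPresheaf ρ hbot F |>.app c s) φ)).unique
      rfl hst_φ.symm
  · intro u
    obtain ⟨y, hy, -⟩ := hφ _ (orbitCompatible_app hbot u φ)
    exact ⟨y, hρ.homGSet_hom_ext hbot φ hy⟩

lemma fixedPointPresheaf_isSheaf (hρ : IsCatExtension ρ) (hbot : ∀ x : P, x₀ ≤ x)
    {J : GrothendieckTopology C} (hJ : IsAtomicTopology J) (M : GSet G) :
    Presieve.IsSheaf J (fixedPointPresheaf ρ hbot M) := by
  refine (hρ.isSheaf_iff_isSheafFor_singleton hbot hJ _).2 fun c φ => ?_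
  rw [hρ.isSheafFor_singleton_iff hbot]
  intro (x : homGSet ρ hbot (ρ.obj ⟨x₀⟩) ⟶ M) hx
  set m := x.app (op (SingleObj.star G)) (𝟙 _)
  have hx_gmor (a : G) : x.app (op (SingleObj.star G)) (ρ.map (gmor hbot a)) = M.act a m := by
    simpa only [Category.comp_id] using homGSet_hom_app_gmor_comp hbot x a (𝟙 _)
  have hm : OrbitCompatible hbot M φ m := fun a b hab => by
    have := congr_arg (fun u : homGSet ρ hbot _ ⟶ M => u.app (op (SingleObj.star G)) (𝟙 _))
      (hx a b hab)
    change x.app _ (𝟙 _ ≫ ρ.map (gmor hbot a)) = x.app _ (𝟙 _ ≫ ρ.map (gmor hbot b)) at this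
    rwa [Category.id_comp, Category.id_comp, hx_gmor, hx_gmor] at this
  obtain ⟨y, hy⟩ := hρ.exists_homGSet_hom_app_eq hbot φ hm
  refine ⟨y, hρ.homGSet_hom_ext hbot (𝟙 _) ?_,
    fun (y' : homGSet ρ hbot c ⟶ M) hy' => hρ.homGSet_hom_ext hbot φ ?_⟩
  · rw [fixedPointPresheaf_map_app, Category.id_comp, hy]
  · rw [hy]
    change y'.app _ φ = x.app _ (𝟙 _)
    rw [← hy', fixedPointPresheaf_map_app, Category.id_comp]

end IsCatExtension

theorem isSheaf_iff_fixedPoint_general (G : Type) [Group G] (P : Type) [PartialOrder P]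
    [MulAction G P] [CovariantClass G P (· • ·) (· ≤ ·)]
    (x₀ : P) (hbot : ∀ x : P, x₀ ≤ x)
    (C : Type) [SmallCategory C] (ρ : Transporter G P ⥤ C) (hρ : IsCatExtension ρ)
    (J : GrothendieckTopology C) (hJ : IsAtomicTopology J) (𝔊 : Cᵒᵖ ⥤ Type) :
    Presieve.IsSheaf J 𝔊 ↔
      ∃ M : GSet G, Nonempty (𝔊 ≅ fixedPointPresheaf ρ hbot M) := by
  refine ⟨fun h𝔊 => ?_, fun ⟨M, ⟨e⟩⟩ =>
    Presieve.isSheaf_iso J e.symm (hρ.fixedPointPresheaf_isSheaf hbot hJ M)⟩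
  have := hρ.isIso_toFixedPointPresheaf hbot hJ h𝔊
  exact ⟨evalGSet ρ hbot 𝔊, ⟨asIso (toFixedPointPresheaf ρ hbot 𝔊)⟩⟩

/-- For a category extension `ρ : P⋊G ⥤ C` with the atomic topology on `C`, a
presheaf of sets on `C` is a sheaf iff it is isomorphic to a fixed-point presheaf
`F_M` for some right `G`-set `M`. -/
theorem isSheaf_iff_fixedPoint (G : Type) [Group G] [Finite G] (P : Type) [PartialOrder P]
    [MulAction G P] [CovariantClass G P (· • ·) (· ≤ ·)]
    (x₀ : P) (hbot : ∀ x : P, x₀ ≤ x)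
    (C : Type) [SmallCategory C] (ρ : Transporter G P ⥤ C) (hρ : IsCatExtension ρ)
    (J : GrothendieckTopology C) (hJ : IsAtomicTopology J) (𝔊 : Cᵒᵖ ⥤ Type) :
    Presieve.IsSheaf J 𝔊 ↔
      ∃ M : GSet G, Nonempty (𝔊 ≅ fixedPointPresheaf ρ hbot M) :=
  isSheaf_iff_fixedPoint_general G P x₀ hbot C ρ hρ J hJ 𝔊
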